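/- arXiv:math/0702505 — 5 statements merged into one kernel-verified Lean document; each statement's English description precedes it below -/
import Mathlib

section
/- In the root system D_4, there exists a unique decomposition of the set of positive roots D_4^+ into three sets F_1, F_2, F_3, each consisting of four pairwise orthogonal roots. -/
/-- The `i`-th standard basis vector of `ℤ⁴`. -/
def stdVec (i : Fin 4) : Fin 4 → ℤ := fun j => if j = i then 1 else 0

/-- The standard dot product on `ℤ⁴`. -/
def dotZ (v w : Fin 4 → ℤ) : ℤ := ∑ i, v i * w i

/-- The 12 positive roots of `D₄`: `εᵢ − εⱼ` and `εᵢ + εⱼ` for `i < j`. -/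
def D4pos : Finset (Fin 4 → ℤ) :=
  ((Finset.univ : Finset (Fin 4 × Fin 4)).filter (fun p => p.1 < p.2)).image
      (fun p => stdVec p.1 - stdVec p.2) ∪
  ((Finset.univ : Finset (Fin 4 × Fin 4)).filter (fun p => p.1 < p.2)).image
      (fun p => stdVec p.1 + stdVec p.2)

/-!
Every positive root `α` of `D₄` is orthogonal to exactly three other positive roots, and these
four roots are already pairwise orthogonal. Hence a set of four pairwise orthogonal positive roots
containing `α` is forced to be `α` together with its orthogonal roots, so there are only three
such sets, one for each way of splitting the coordinates `{1, 2, 3, 4}` into two pairs; and these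
three partition `D₄⁺`.
-/

theorem Finset.eq_filter_of_forall_rel_of_card_le {ι : Type*} [DecidableEq ι] {r : ι → ι → Prop}
    [DecidableRel r] {S F : Finset ι} {a : ι} (hFS : F ⊆ S)
    (hr : ∀ b ∈ F, b ≠ a → r a b) (hcard : (S.filter fun b => b = a ∨ r a b).card ≤ F.card) :
    F = S.filter fun b => b = a ∨ r a b := by
  refine Finset.eq_of_subset_of_card_le (fun b hb => Finset.mem_filter.mpr ⟨hFS hb, ?_⟩) hcard
  by_cases hba : b = a
  · exact Or.inl hba
  · exact Or.inr (hr b hb hba)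

def IsD4Frame (F : Finset (Fin 4 → ℤ)) : Prop :=
  F ⊆ D4pos ∧ F.card = 4 ∧ ∀ α ∈ F, ∀ β ∈ F, α ≠ β → dotZ α β = 0

def D4frames : Finset (Finset (Fin 4 → ℤ)) :=
  {{![1, -1, 0, 0], ![1, 1, 0, 0], ![0, 0, 1, -1], ![0, 0, 1, 1]},
   {![1, 0, -1, 0], ![1, 0, 1, 0], ![0, 1, 0, -1], ![0, 1, 0, 1]},
   {![1, 0, 0, -1], ![1, 0, 0, 1], ![0, 1, -1, 0], ![0, 1, 1, 0]}}

theorem filter_orthogonal_mem_D4frames :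
    ∀ α ∈ D4pos, D4pos.filter (fun β => β = α ∨ dotZ α β = 0) ∈ D4frames := by
  decide

theorem card_of_mem_D4frames : ∀ F ∈ D4frames, F.card = 4 := by
  decide

theorem mem_D4frames_of_isD4Frame {F : Finset (Fin 4 → ℤ)} (hF : IsD4Frame F) :
    F ∈ D4frames := by
  obtain ⟨hsub, hcard, horth⟩ := hF
  obtain ⟨α, hα⟩ := Finset.card_pos.mp (by omega : 0 < F.card)
  have hclosure := filter_orthogonal_mem_D4frames α (hsub hα)
  rwa [Finset.eq_filter_of_forall_rel_of_card_le (r := fun α β => dotZ α β = 0) hsub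
    (fun β hβ hβα => horth α hα β hβ hβα.symm) (by rw [card_of_mem_D4frames _ hclosure, hcard])]

theorem D4frames_spec : D4frames.card = 3 ∧ (∀ F ∈ D4frames, IsD4Frame F) ∧
    (∀ F ∈ D4frames, ∀ G ∈ D4frames, F ≠ G → Disjoint F G) ∧ D4frames.sup id = D4pos := by
  unfold IsD4Frame
  decide

/-- There is a unique decomposition of the positive roots of `D₄` into three sets, each
consisting of four pairwise orthogonal roots. -/
theorem D4_unique_orthogonal_partition :
    ∃! P : Finset (Finset (Fin 4 → ℤ)),
      P.card = 3 ∧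
      (∀ F ∈ P, F ⊆ D4pos ∧ F.card = 4 ∧
        ∀ α ∈ F, ∀ β ∈ F, α ≠ β → dotZ α β = 0) ∧
      (∀ F ∈ P, ∀ G ∈ P, F ≠ G → Disjoint F G) ∧
      P.sup id = D4pos := by
  refine ⟨D4frames, D4frames_spec, ?_⟩
  rintro P ⟨hcard, hframes, -, -⟩
  refine Finset.eq_of_subset_of_card_le (fun F hF => mem_D4frames_of_isD4Frame (hframes F hF)) ?_
  rw [hcard, D4frames_spec.1]
end

section
/- Let M(D_4) ⊂ Z^{D_4^+} be the lattice of integer-valued functions n on the 12 positive roots of D_4 satisfying Σ_α n_α · (α ⊗ α) = 0 in Sym^2 of the root lattice. Then M(D_4) consists exactly of the functions that are constant on each of the three fourtuples F_1, F_2, F_3 of pairwise orthogonal positive roots and whose three constant values sum to 0. -/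
section ConstWithZeroSum

variable {α ι M : Type*} [Fintype ι] [AddCommMonoid M]

def IsConstWithZeroSum (n : α → M) (F : ι → Finset α) : Prop :=
  ∃ c : ι → M, ∑ k, c k = 0 ∧ ∀ k, ∀ a ∈ F k, n a = c k

theorem isConstWithZeroSum_comp_equiv (n : α → M) (F : ι → Finset α) (σ : ι ≃ ι) :
    IsConstWithZeroSum n (F ∘ σ) ↔ IsConstWithZeroSum n F := by
  constructor
  · rintro ⟨c, hsum, hc⟩
    refine ⟨fun k => c (σ.symm k), by rwa [Equiv.sum_comp σ.symm c], fun k a ha => ?_⟩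
    simpa using hc (σ.symm k) a (by simpa using ha)
  · rintro ⟨c, hsum, hc⟩
    exact ⟨fun k => c (σ k), by rwa [Equiv.sum_comp σ c], fun k a ha => hc (σ k) a ha⟩

theorem isConstWithZeroSum_fin_three_iff (n : α → M) (F₁ F₂ F₃ : Finset α) :
    IsConstWithZeroSum n ![F₁, F₂, F₃] ↔
      ∃ c₁ c₂ c₃ : M, c₁ + c₂ + c₃ = 0 ∧
        (∀ a ∈ F₁, n a = c₁) ∧ (∀ a ∈ F₂, n a = c₂) ∧ (∀ a ∈ F₃, n a = c₃) := by
  constructor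
  · rintro ⟨c, hsum, hc⟩
    exact ⟨c 0, c 1, c 2, by simpa [Fin.sum_univ_three] using hsum, hc 0, hc 1, hc 2⟩
  · rintro ⟨c₁, c₂, c₃, hsum, h₁, h₂, h₃⟩
    refine ⟨![c₁, c₂, c₃], by simpa [Fin.sum_univ_three] using hsum, ?_⟩
    intro k
    fin_cases k
    exacts [h₁, h₂, h₃]

end ConstWithZeroSum

theorem exists_equiv_comp_eq_of_pairwise_disjoint {α ι : Type*} [Finite ι] {F G : ι → Finset α}
    (hF : ∀ k, ∃ j, F k = G j) (hdisj : Pairwise fun i j => Disjoint (F i) (F j))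
    (hG : ∀ j, (G j).Nonempty) : ∃ σ : ι ≃ ι, G ∘ σ = F := by
  choose f hf using hF
  have hinj : Function.Injective f := by
    intro i j hij
    by_contra hne
    have h : Disjoint (F i) (F j) := hdisj hne
    rw [hf i, hf j, hij, Finset.disjoint_self_iff_empty] at h
    exact (hG (f j)).ne_empty h
  exact ⟨Equiv.ofBijective f hinj.bijective_of_finite, funext fun k => (hf k).symm⟩

/-- The fourtuples `F_k`: `ε_i ± ε_j, ε_k ± ε_l` for each perfect matching `{ij, kl}` of the indices. -/
def orthoQuad : Fin 3 → Finset (Fin 4 → ℤ) :=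
  ![{![1, -1, 0, 0], ![1, 1, 0, 0], ![0, 0, 1, -1], ![0, 0, 1, 1]},
    {![1, 0, -1, 0], ![1, 0, 1, 0], ![0, 1, 0, -1], ![0, 1, 0, 1]},
    {![1, 0, 0, -1], ![1, 0, 0, 1], ![0, 1, -1, 0], ![0, 1, 1, 0]}]

theorem card_orthoQuad (k : Fin 3) : (orthoQuad k).card = 4 := by
  fin_cases k <;> rfl

theorem D4pos_eq_biUnion_orthoQuad : D4pos = Finset.univ.biUnion orthoQuad := by
  decide

theorem sum_D4pos_eq_sum_orthoQuad {M : Type*} [AddCommMonoid M] (f : (Fin 4 → ℤ) → M) :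
    ∑ α ∈ D4pos, f α = ∑ k, ∑ α ∈ orthoQuad k, f α := by
  rw [D4pos_eq_biUnion_orthoQuad, Finset.sum_biUnion]
  intro i _ j _ hij
  fin_cases i <;> fin_cases j <;> first | exact absurd rfl hij | decide

theorem sum_orthoQuad_dotZ_sq (k : Fin 3) (x : Fin 4 → ℤ) :
    ∑ α ∈ orthoQuad k, dotZ α x ^ 2 = 2 * dotZ x x := by
  fin_cases k <;> simp [orthoQuad, dotZ, Fin.sum_univ_four] <;> ring

theorem sum_D4pos_mul_dotZ_sq (n : (Fin 4 → ℤ) → ℤ) (x : Fin 4 → ℤ) :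
    ∑ α ∈ D4pos, n α * dotZ α x ^ 2 =
      n ![1, -1, 0, 0] * (x 0 - x 1) ^ 2 + n ![1, 1, 0, 0] * (x 0 + x 1) ^ 2 +
      n ![0, 0, 1, -1] * (x 2 - x 3) ^ 2 + n ![0, 0, 1, 1] * (x 2 + x 3) ^ 2 +
      n ![1, 0, -1, 0] * (x 0 - x 2) ^ 2 + n ![1, 0, 1, 0] * (x 0 + x 2) ^ 2 +
      n ![0, 1, 0, -1] * (x 1 - x 3) ^ 2 + n ![0, 1, 0, 1] * (x 1 + x 3) ^ 2 +
      n ![1, 0, 0, -1] * (x 0 - x 3) ^ 2 + n ![1, 0, 0, 1] * (x 0 + x 3) ^ 2 +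
      n ![0, 1, -1, 0] * (x 1 - x 2) ^ 2 + n ![0, 1, 1, 0] * (x 1 + x 2) ^ 2 := by
  rw [sum_D4pos_eq_sum_orthoQuad]
  simp [Fin.sum_univ_three, orthoQuad, dotZ, Fin.sum_univ_four]
  ring

theorem forall_sum_D4pos_mul_dotZ_sq_eq_zero_iff (n : (Fin 4 → ℤ) → ℤ) :
    (∀ x : Fin 4 → ℤ, ∑ α ∈ D4pos, n α * dotZ α x ^ 2 = 0) ↔ IsConstWithZeroSum n orthoQuad := by
  constructor
  · intro h
    have e₀ := h ![1, 0, 0, 0]; have e₁ := h ![0, 1, 0, 0]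
    have e₂ := h ![0, 0, 1, 0]; have e₃ := h ![0, 0, 0, 1]
    have e₀₁ := h ![1, 1, 0, 0]; have e₀₂ := h ![1, 0, 1, 0]; have e₀₃ := h ![1, 0, 0, 1]
    have e₁₂ := h ![0, 1, 1, 0]; have e₁₃ := h ![0, 1, 0, 1]; have e₂₃ := h ![0, 0, 1, 1]
    simp only [sum_D4pos_mul_dotZ_sq] at e₀ e₁ e₂ e₃ e₀₁ e₀₂ e₀₃ e₁₂ e₁₃ e₂₃
    norm_num [Matrix.cons_val_two, Matrix.cons_val_three, Matrix.tail_cons]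
      at e₀ e₁ e₂ e₃ e₀₁ e₀₂ e₀₃ e₁₂ e₁₃ e₂₃
    refine ⟨![n ![1, -1, 0, 0], n ![1, 0, -1, 0], n ![1, 0, 0, -1]], ?_, ?_⟩
    · simp only [Fin.sum_univ_three, Matrix.cons_val_zero, Matrix.cons_val_one,
        Matrix.cons_val_two, Matrix.tail_cons, Matrix.head_cons]
      linarith
    · intro k α hα
      fin_cases k <;> fin_cases hα <;> simp <;> linarith
  · rintro ⟨c, hsum, hc⟩ x
    calc ∑ α ∈ D4pos, n α * dotZ α x ^ 2
        = ∑ k, c k * ∑ α ∈ orthoQuad k, dotZ α x ^ 2 := by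
          rw [sum_D4pos_eq_sum_orthoQuad]
          refine Finset.sum_congr rfl fun k _ => ?_
          rw [Finset.mul_sum]
          exact Finset.sum_congr rfl fun α hα => by rw [hc k α hα]
      _ = (∑ k, c k) * (2 * dotZ x x) := by
          simp only [sum_orthoQuad_dotZ_sq, Finset.sum_mul]
      _ = 0 := by rw [hsum, zero_mul]

theorem exists_orthoQuad_eq_filter_orthogonal :
    ∀ α ∈ D4pos, ∃ k, D4pos.filter (fun β => β = α ∨ dotZ α β = 0) = orthoQuad k := by
  decide

theorem exists_eq_orthoQuad {F : Finset (Fin 4 → ℤ)} (hsub : F ⊆ D4pos) (hcard : F.card = 4)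
    (horth : ∀ α ∈ F, ∀ β ∈ F, α ≠ β → dotZ α β = 0) : ∃ k, F = orthoQuad k := by
  obtain ⟨α, hα⟩ : F.Nonempty := Finset.card_pos.mp (by omega)
  obtain ⟨k, hk⟩ := exists_orthoQuad_eq_filter_orthogonal α (hsub hα)
  refine ⟨k, Finset.eq_of_subset_of_card_le ?_ (by rw [hcard, card_orthoQuad])⟩
  intro β hβ
  rw [← hk, Finset.mem_filter]
  refine ⟨hsub hβ, ?_⟩
  by_cases hβα : β = α
  · exact Or.inl hβα
  · exact Or.inr (horth α hα β hβ (Ne.symm hβα))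

theorem MD4_characterization_general (F1 F2 F3 : Finset (Fin 4 → ℤ))
    (hsub : F1 ⊆ D4pos ∧ F2 ⊆ D4pos ∧ F3 ⊆ D4pos)
    (hcard : F1.card = 4 ∧ F2.card = 4 ∧ F3.card = 4)
    (horth : ∀ F ∈ [F1, F2, F3], ∀ α ∈ F, ∀ β ∈ F, α ≠ β → dotZ α β = 0)
    (hdisj : Disjoint F1 F2 ∧ Disjoint F1 F3 ∧ Disjoint F2 F3)
    (n : (Fin 4 → ℤ) → ℤ) :
    (∀ x : Fin 4 → ℤ, ∑ α ∈ D4pos, n α * (dotZ α x) ^ 2 = 0) ↔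
    ∃ c1 c2 c3 : ℤ, c1 + c2 + c3 = 0 ∧
      (∀ α ∈ F1, n α = c1) ∧ (∀ α ∈ F2, n α = c2) ∧ (∀ α ∈ F3, n α = c3) := by
  set F : Fin 3 → Finset (Fin 4 → ℤ) := ![F1, F2, F3]
  have hF : ∀ k, ∃ j, F k = orthoQuad j := by
    intro k
    fin_cases k
    exacts [exists_eq_orthoQuad hsub.1 hcard.1 (horth F1 (by simp)),
      exists_eq_orthoQuad hsub.2.1 hcard.2.1 (horth F2 (by simp)),
      exists_eq_orthoQuad hsub.2.2 hcard.2.2 (horth F3 (by simp))]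
  have hFdisj : Pairwise fun i j => Disjoint (F i) (F j) := by
    obtain ⟨h₁₂, h₁₃, h₂₃⟩ := hdisj
    intro i j hij
    fin_cases i <;> fin_cases j <;> simp_all [F, disjoint_comm]
  obtain ⟨σ, hσ⟩ := exists_equiv_comp_eq_of_pairwise_disjoint hF hFdisj
    fun j => Finset.card_pos.mp (by rw [card_orthoQuad]; norm_num)
  rw [forall_sum_D4pos_mul_dotZ_sq_eq_zero_iff, ← isConstWithZeroSum_comp_equiv n orthoQuad σ, hσ,
    isConstWithZeroSum_fin_three_iff]

/-- Let `F₁, F₂, F₃` be the (unique) partition of `D₄⁺` into fourtuples of pairwise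
orthogonal roots.  A function `n : D₄⁺ → ℤ` satisfies `Σ n_α · (α ⊗ α) = 0` in `Sym²` of
the root lattice (equivalently, the quadratic form `x ↦ Σ n_α (α·x)²` vanishes
identically) if and only if `n` is constant on each fourtuple `Fₖ` with the three
constant values summing to `0`. -/
theorem MD4_characterization (F1 F2 F3 : Finset (Fin 4 → ℤ))
    (hsub : F1 ⊆ D4pos ∧ F2 ⊆ D4pos ∧ F3 ⊆ D4pos)
    (hcard : F1.card = 4 ∧ F2.card = 4 ∧ F3.card = 4)
    (horth : ∀ F ∈ [F1, F2, F3], ∀ α ∈ F, ∀ β ∈ F, α ≠ β → dotZ α β = 0)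
    (hdisj : Disjoint F1 F2 ∧ Disjoint F1 F3 ∧ Disjoint F2 F3)
    (hunion : F1 ∪ F2 ∪ F3 = D4pos)
    (n : (Fin 4 → ℤ) → ℤ) :
    (∀ x : Fin 4 → ℤ, ∑ α ∈ D4pos, n α * (dotZ α x) ^ 2 = 0) ↔
    ∃ c1 c2 c3 : ℤ, c1 + c2 + c3 = 0 ∧
      (∀ α ∈ F1, n α = c1) ∧ (∀ α ∈ F2, n α = c2) ∧ (∀ α ∈ F3, n α = c3) :=
  MD4_characterization_general F1 F2 F3 hsub hcard horth hdisj n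
end

section
/- Let N ⊂ ⊕_i N_i be a sublattice of a finite direct sum of lattices, with projections π_i : N → N_i, and let σ ⊂ N ⊗ Q be a rational polyhedral cone. Assume that for every face γ of σ and every i, π_i(γ) is a face of π_i(σ), and that for every face γ of σ the natural map ⊕_i Ann⟨π_i(γ)⟩ → Ann⟨γ⟩ is surjective. Then σ = (N ⊗ Q) ∩ ∏_i π_i(σ). -/
/-- The rational polyhedral cone generated by a finite set `G`. -/
def coneHull {V : Type*} [AddCommGroup V] [Module ℚ V] (G : Finset V) : Set V :=
  {x | ∃ c : V → ℚ, (∀ v, 0 ≤ c v) ∧ x = ∑ v ∈ G, c v • v}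

/-- `γ` is a face of the cone `σ`: it is cut out of `σ` by a linear functional which is
nonnegative on `σ`. -/
def IsFaceOf {V : Type*} [AddCommGroup V] [Module ℚ V] (γ σ : Set V) : Prop :=
  ∃ u : V →ₗ[ℚ] ℚ, (∀ x ∈ σ, 0 ≤ u x) ∧ γ = {x ∈ σ | u x = 0}

section helpers

variable {V : Type*} [AddCommGroup V] [Module ℚ V]

lemma zero_mem_coneHull (G : Finset V) : (0 : V) ∈ coneHull G :=
  ⟨0, fun _ => le_refl 0, by simp⟩

lemma mem_coneHull_self {G : Finset V} {v : V} (hv : v ∈ G) : v ∈ coneHull G := by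
  classical
  refine ⟨fun w => if w = v then 1 else 0, fun w => by dsimp only; split <;> norm_num, ?_⟩
  rw [show (∑ w ∈ G, (if w = v then (1:ℚ) else 0) • w) = ∑ w ∈ G, (if w = v then w else 0) by
    refine Finset.sum_congr rfl fun w _ => by split <;> simp]
  simp [Finset.sum_ite_eq' G v (fun w => w), hv]

lemma add_mem_coneHull {G : Finset V} {x y : V} (hx : x ∈ coneHull G) (hy : y ∈ coneHull G) :
    x + y ∈ coneHull G := by
  obtain ⟨c, hc, rfl⟩ := hx
  obtain ⟨c', hc', rfl⟩ := hy
  exact ⟨c + c', fun v => add_nonneg (hc v) (hc' v), by simp [add_smul, Finset.sum_add_distrib]⟩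

lemma smul_mem_coneHull {G : Finset V} {x : V} {t : ℚ} (ht : 0 ≤ t) (hx : x ∈ coneHull G) :
    t • x ∈ coneHull G := by
  obtain ⟨c, hc, rfl⟩ := hx
  exact ⟨fun v => t * c v, fun v => mul_nonneg ht (hc v),
    by rw [Finset.smul_sum]; exact Finset.sum_congr rfl fun v _ => by dsimp only; rw [smul_smul]⟩

lemma sum_mem_coneHull {G : Finset V} {ι : Type*} (t : Finset ι) (g : ι → V) (c : ι → ℚ)
    (hc : ∀ i ∈ t, 0 ≤ c i) (hg : ∀ i ∈ t, g i ∈ coneHull G) :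
    (∑ i ∈ t, c i • g i) ∈ coneHull G := by
  classical
  induction t using Finset.induction with
  | empty => simpa using zero_mem_coneHull G
  | insert _ _ hnot ih =>
    rename_i a s
    rw [Finset.sum_insert hnot]
    exact add_mem_coneHull
      (smul_mem_coneHull (hc a (Finset.mem_insert_self a s)) (hg a (Finset.mem_insert_self a s)))
      (ih (fun i hi => hc i (Finset.mem_insert_of_mem hi))
          (fun i hi => hg i (Finset.mem_insert_of_mem hi)))

lemma coneHull_mono {s G : Finset V} (h : s ⊆ G) : coneHull s ⊆ coneHull G := by
  rintro x ⟨c, hc, rfl⟩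
  exact sum_mem_coneHull s id c (fun v _ => hc v) (fun v hv => mem_coneHull_self (h hv))

lemma nonneg_on_coneHull {G : Finset V} {u : V →ₗ[ℚ] ℚ} (hu : ∀ v ∈ G, 0 ≤ u v) :
    ∀ x ∈ coneHull G, 0 ≤ u x := by
  rintro x ⟨c, hc, rfl⟩
  rw [map_sum]
  exact Finset.sum_nonneg fun v hv => by
    rw [map_smul, smul_eq_mul]; exact mul_nonneg (hc v) (hu v hv)

lemma exists_dual_neg (x : V) (hx : x ≠ 0) : ∃ u : V →ₗ[ℚ] ℚ, u x < 0 := by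
  have : ¬ ∀ φ : Module.Dual ℚ V, φ x = 0 := fun h =>
    hx ((Module.forall_dual_apply_eq_zero_iff ℚ x).mp h)
  push_neg at this
  obtain ⟨φ, hφ⟩ := this
  refine ⟨(-(φ x)⁻¹) • φ, ?_⟩
  simp only [LinearMap.smul_apply, smul_eq_mul]
  rw [neg_mul, inv_mul_cancel₀ hφ]
  norm_num

/-- Farkas' lemma over `ℚ`. -/
lemma farkas : ∀ (n : ℕ) (G : Finset V), G.card ≤ n → ∀ x : V, x ∉ coneHull G →
    ∃ u : V →ₗ[ℚ] ℚ, (∀ v ∈ G, 0 ≤ u v) ∧ u x < 0 := by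
  classical
  intro n
  induction n with
  | zero =>
    intro G hG x hx
    rw [Nat.le_zero, Finset.card_eq_zero] at hG
    subst hG
    have hx0 : x ≠ 0 := fun h => hx (h ▸ zero_mem_coneHull ∅)
    obtain ⟨u, hu⟩ := exists_dual_neg x hx0
    exact ⟨u, fun v hv => absurd hv (Finset.notMem_empty v), hu⟩
  | succ n ih =>
    intro G hG x hx
    rcases G.eq_empty_or_nonempty with rfl | ⟨a, ha⟩
    · have hx0 : x ≠ 0 := fun h => hx (h ▸ zero_mem_coneHull ∅)
      obtain ⟨u, hu⟩ := exists_dual_neg x hx0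
      exact ⟨u, fun v hv => absurd hv (Finset.notMem_empty v), hu⟩
    · set s := G.erase a with hs
      have hGi : G = insert a s := (Finset.insert_erase ha).symm
      have has : a ∉ s := Finset.notMem_erase a G
      have hscard : s.card ≤ n := by
        have h1 : s.card = G.card - 1 := by rw [hs, Finset.card_erase_of_mem ha]
        have h2 : 1 ≤ G.card := Finset.card_pos.mpr ⟨a, ha⟩
        omega
      have hxs : x ∉ coneHull s := fun h => hx (coneHull_mono (Finset.erase_subset a G) h)
      obtain ⟨u, hu, hux⟩ := ih s hscard x hxs
      by_cases hua : 0 ≤ u a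
      · refine ⟨u, fun v hv => ?_, hux⟩
        rw [hGi] at hv
        rcases Finset.mem_insert.mp hv with rfl | hv
        · exact hua
        · exact hu v hv
      · push_neg at hua
        have huane : u a ≠ 0 := ne_of_lt hua
        obtain ⟨π, hπ⟩ : ∃ π : V →ₗ[ℚ] V, ∀ z, π z = z - ((u a)⁻¹ * u z) • a := by
          refine ⟨LinearMap.id - (u a)⁻¹ • (u.smulRight a), fun z => ?_⟩
          simp only [LinearMap.sub_apply, LinearMap.id_apply, LinearMap.smul_apply,
            LinearMap.smulRight_apply, smul_smul, smul_eq_mul]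
        have hπa : π a = 0 := by
          rw [hπ a, inv_mul_cancel₀ huane, one_smul, sub_self]
        have huπ : ∀ z, u (π z) = 0 := by
          intro z
          rw [hπ z, map_sub, map_smul, smul_eq_mul]
          field_simp
          ring
        have hG'card : (s.image π).card ≤ n := le_trans (Finset.card_image_le) hscard
        obtain ⟨f, hfspec⟩ : ∃ f : V → V, ∀ w ∈ s.image π, f w ∈ s ∧ π (f w) = w := by
          refine ⟨fun w => if h : ∃ v ∈ s, π v = w then h.choose else 0, fun w hw => ?_⟩
          obtain ⟨v, hv, hvw⟩ := Finset.mem_image.mp hw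
          have hex : ∃ v ∈ s, π v = w := ⟨v, hv, hvw⟩
          dsimp only
          rw [dif_pos hex]
          exact hex.choose_spec
        have hπx : π x ∉ coneHull (s.image π) := by
          rintro ⟨c, hc, hrep⟩
          apply hx
          rw [hGi]
          set S := ∑ w ∈ s.image π, c w * u (f w) with hS
          have hSnn : 0 ≤ S :=
            Finset.sum_nonneg fun w hw => mul_nonneg (hc w) (hu _ (hfspec w hw).1)
          set B := (u a)⁻¹ * (u x - S) with hB
          have hBpos : 0 < B := by
            apply mul_pos_of_neg_of_neg (inv_lt_zero.mpr hua)
            linarith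
          have hxeq : x = (∑ w ∈ s.image π, c w • f w) + B • a := by
            have h1 : ∀ w ∈ s.image π, c w • f w = c w • w + (c w * ((u a)⁻¹ * u (f w))) • a := by
              intro w hw
              have h2 := (hfspec w hw).2
              rw [hπ (f w)] at h2
              have h3 := sub_eq_iff_eq_add.mp h2
              conv_lhs => rw [h3]
              rw [smul_add, smul_smul]
            rw [Finset.sum_congr rfl h1, Finset.sum_add_distrib, ← Finset.sum_smul, ← hrep]
            have h3 : (∑ w ∈ s.image π, c w * ((u a)⁻¹ * u (f w))) = (u a)⁻¹ * S := by
              rw [hS, Finset.mul_sum]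
              exact Finset.sum_congr rfl fun w _ => by ring
            rw [h3, hπ x, hB]
            have : ((u a)⁻¹ * S) • a + ((u a)⁻¹ * (u x - S)) • a = ((u a)⁻¹ * u x) • a := by
              rw [← add_smul]; congr 1; ring
            rw [add_assoc, this]
            abel
          rw [hxeq]
          apply add_mem_coneHull
          · exact sum_mem_coneHull (s.image π) f c (fun w _ => hc w)
              (fun w hw => mem_coneHull_self (Finset.mem_insert_of_mem (hfspec w hw).1))
          · exact smul_mem_coneHull hBpos.le (mem_coneHull_self (Finset.mem_insert_self a s))
        obtain ⟨u', hu', hu'x⟩ := ih (s.image π) hG'card (π x) hπx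
        refine ⟨u'.comp π, fun v hv => ?_, by simpa using hu'x⟩
        rw [hGi] at hv
        rcases Finset.mem_insert.mp hv with rfl | hv
        · simp [LinearMap.comp_apply, hπa]
        · exact hu' (π v) (Finset.mem_image_of_mem π hv)

end helpers

/-- Let `N ⊆ ⊕ᵢ Nᵢ` be a sublattice of a finite direct sum of lattices (here tensored
with `ℚ`: `W ⊆ Πᵢ ℚ^{dᵢ}`), and let `σ ⊆ W` be a rational polyhedral cone.  If for every
face `γ` of `σ` each projection `πᵢ(γ)` is a face of `πᵢ(σ)` and the natural map
`⊕ᵢ Ann⟨πᵢ(γ)⟩ → Ann⟨γ⟩` (annihilators of the linear spans, functionals on `N` resp.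
`Nᵢ`) is surjective, then `σ = (N ⊗ ℚ) ∩ Πᵢ πᵢ(σ)`. -/
theorem cone_eq_inter_of_products
    {ι : Type*} [Fintype ι] (d : ι → ℕ)
    (W : Submodule ℚ (∀ i, Fin (d i) → ℚ))
    (G : Finset (∀ i, Fin (d i) → ℚ)) (hGW : ∀ v ∈ G, v ∈ W)
    (σ : Set (∀ i, Fin (d i) → ℚ)) (hσ : σ = coneHull G)
    (hface : ∀ γ, IsFaceOf γ σ → ∀ i : ι,
      IsFaceOf ((fun v => v i) '' γ) ((fun v => v i) '' σ))
    (hann : ∀ γ, IsFaceOf γ σ →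
      ∀ u : (∀ i, Fin (d i) → ℚ) →ₗ[ℚ] ℚ, (∀ x ∈ γ, u x = 0) →
      ∃ w : ∀ i, (Fin (d i) → ℚ) →ₗ[ℚ] ℚ,
        (∀ i, ∀ y ∈ γ, w i (y i) = 0) ∧
        ∀ x ∈ W, u x = ∑ i, w i (x i)) :
    σ = {x | x ∈ W ∧ ∀ i, x i ∈ (fun v => v i) '' σ} := by
  classical
  subst hσ
  apply Set.Subset.antisymm
  · intro x hx
    refine ⟨?_, fun i => ⟨x, hx, rfl⟩⟩
    obtain ⟨c, hc, rfl⟩ := hx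
    exact Submodule.sum_mem W fun v hv => Submodule.smul_mem W _ (hGW v hv)
  · rintro x ⟨hxW, hxi⟩
    by_contra hx
    set P : ((∀ i, Fin (d i) → ℚ) →ₗ[ℚ] ℚ) → Prop :=
      fun u => (∀ v ∈ G, 0 ≤ u v) ∧ u x < 0 with hP
    have hPne : ∃ u, P u := farkas G.card G le_rfl x hx
    set C : Set ℕ := {n | ∃ u, P u ∧ (G.filter fun v => u v = 0).card = n} with hC
    have hCne : C.Nonempty := ⟨_, hPne.choose, hPne.choose_spec, rfl⟩
    have hCbdd : BddAbove C := ⟨G.card, by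
      rintro n ⟨u, hu, rfl⟩
      exact Finset.card_filter_le G _⟩
    obtain ⟨u, hu, hm⟩ := Nat.sSup_mem hCne hCbdd
    have hmax : ∀ u', P u' →
        (G.filter fun v => u' v = 0).card ≤ (G.filter fun v => u v = 0).card := by
      intro u' h
      rw [hm]
      exact le_csSup hCbdd ⟨u', h, rfl⟩
    set γ : Set (∀ i, Fin (d i) → ℚ) := {z ∈ coneHull G | u z = 0} with hγdef
    have hγ : IsFaceOf γ (coneHull G) := ⟨u, nonneg_on_coneHull hu.1, rfl⟩
    obtain ⟨w, hw0, hwu⟩ := hann γ hγ u (fun z hz => hz.2)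
    have hsum : ∑ i, w i (x i) < 0 := by rw [← hwu x hxW]; exact hu.2
    obtain ⟨j, hj⟩ : ∃ j, w j (x j) < 0 := by
      by_contra h
      push_neg at h
      exact absurd (Finset.sum_nonneg fun i _ => h i) (not_le.mpr hsum)
    obtain ⟨s, hs, hsx⟩ := hxi j
    by_cases hcase : ∀ v ∈ G, 0 ≤ w j (v j)
    · -- then w j is nonnegative on π_j(σ), contradicting hj
      have hsx' : s j = x j := hsx
      obtain ⟨c, hc, hse⟩ := hs
      have hsj : s j = ∑ v ∈ G, c v • (v j) := by
        rw [hse, Finset.sum_apply]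
        rfl
      have h0 : (0:ℚ) ≤ w j (s j) := by
        rw [hsj, map_sum]
        exact Finset.sum_nonneg fun v hv => by
          rw [map_smul, smul_eq_mul]
          exact mul_nonneg (hc v) (hcase v hv)
      rw [hsx'] at h0
      exact absurd h0 (not_le.mpr hj)
    · push_neg at hcase
      set B := G.filter fun v => w j (v j) < 0 with hBdef
      have hBne : B.Nonempty := by
        obtain ⟨v, hv, hvw⟩ := hcase
        exact ⟨v, Finset.mem_filter.mpr ⟨hv, hvw⟩⟩
      obtain ⟨v₀, hv₀B, hv₀min⟩ :=
        Finset.exists_min_image B (fun v => u v / (-(w j (v j)))) hBne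
      have hv₀G : v₀ ∈ G := (Finset.mem_filter.mp hv₀B).1
      have hwv₀ : w j (v₀ j) < 0 := (Finset.mem_filter.mp hv₀B).2
      have huv₀ : 0 < u v₀ := by
        rcases lt_or_eq_of_le (hu.1 v₀ hv₀G) with h | h
        · exact h
        · exfalso
          have : v₀ ∈ γ := ⟨mem_coneHull_self hv₀G, h.symm⟩
          exact absurd (hw0 j v₀ this) (ne_of_lt hwv₀)
      set t := u v₀ / (-(w j (v₀ j))) with htdef
      have ht : 0 < t := div_pos huv₀ (neg_pos.mpr hwv₀)
      set u' := u + t • ((w j).comp (LinearMap.proj j)) with hu'def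
      have hu'app : ∀ z, u' z = u z + t * w j (z j) := by
        intro z
        simp only [hu'def, LinearMap.add_apply, LinearMap.smul_apply, LinearMap.comp_apply,
          LinearMap.proj_apply, smul_eq_mul]
      have hP' : P u' := by
        constructor
        · intro v hv
          rw [hu'app]
          by_cases hwv : 0 ≤ w j (v j)
          · exact add_nonneg (hu.1 v hv) (mul_nonneg ht.le hwv)
          · push_neg at hwv
            have hvB : v ∈ B := Finset.mem_filter.mpr ⟨hv, hwv⟩
            have h2 : t * (-(w j (v j))) ≤ u v :=
              (le_div_iff₀ (neg_pos.mpr hwv)).mp (hv₀min v hvB)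
            linarith
        · rw [hu'app]
          have : t * w j (x j) < 0 := mul_neg_of_pos_of_neg ht hj
          have h2 := hu.2
          linarith
      have hsub : (G.filter fun v => u v = 0) ⊆ (G.filter fun v => u' v = 0) := by
        intro v hv
        obtain ⟨hvG, hv0⟩ := Finset.mem_filter.mp hv
        have hvγ : v ∈ γ := ⟨mem_coneHull_self hvG, hv0⟩
        refine Finset.mem_filter.mpr ⟨hvG, ?_⟩
        rw [hu'app, hv0, hw0 j v hvγ]
        ring
      have hv₀new : u' v₀ = 0 := by
        have hne : (w j) (v₀ j) ≠ 0 := ne_of_lt hwv₀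
        have hkey : t * w j (v₀ j) = -u v₀ := by
          rw [htdef, div_mul_eq_mul_div, div_eq_iff (neg_ne_zero.mpr hne)]
          ring
        rw [hu'app, hkey]
        ring
      have hv₀old : v₀ ∉ (G.filter fun v => u v = 0) := by
        intro h
        exact absurd ((Finset.mem_filter.mp h).2) (ne_of_gt huv₀)
      have hssub : (G.filter fun v => u v = 0) ⊂ (G.filter fun v => u' v = 0) :=
        ⟨hsub, fun h => hv₀old (h (Finset.mem_filter.mpr ⟨hv₀G, hv₀new⟩))⟩
      exact absurd (hmax u' hP') (not_le.mpr (Finset.card_lt_card hssub))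
end

section
/- A collection of convex subsets {σ_i} of R^n is called convexly disjoint if every convex subset of the union ∪_i σ_i is contained in one of the σ_i. Then: (1) if each of two collections {σ_i} in R^n and {τ_j} in R^m is convexly disjoint, the product collection {σ_i × τ_j} in R^{n+m} is convexly disjoint; and (2) if {σ_i} in R^n is convexly disjoint and L ⊂ R^n is a linear subspace, then {σ_i ∩ L} is convexly disjoint. -/
/-- A collection of subsets of a real vector space is *convexly disjoint* if every
convex subset of the union is contained in one of the members. -/
def ConvexlyDisjoint {V : Type*} [AddCommGroup V] [Module ℝ V]
    {ι : Type*} (σ : ι → Set V) : Prop :=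
  ∀ C : Set V, Convex ℝ C → C ⊆ ⋃ i, σ i → ∃ i, C ⊆ σ i

namespace ConvexlyDisjoint

variable {V W : Type*} [AddCommGroup V] [Module ℝ V] [AddCommGroup W] [Module ℝ W]
  {ι κ : Type*} {σ : ι → Set V} {τ : κ → Set W}

/-- The two projections of a convex set are convex, so each lands in a single factor. -/
theorem prod (hσ : ConvexlyDisjoint σ) (hτ : ConvexlyDisjoint τ) :
    ConvexlyDisjoint (fun p : ι × κ => σ p.1 ×ˢ τ p.2) := by
  intro C hC hCU
  have hfst : Prod.fst '' C ⊆ ⋃ i, σ i := by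
    rintro _ ⟨x, hx, rfl⟩
    obtain ⟨⟨i, _⟩, hi⟩ := Set.mem_iUnion.1 (hCU hx)
    exact Set.mem_iUnion.2 ⟨i, hi.1⟩
  have hsnd : Prod.snd '' C ⊆ ⋃ j, τ j := by
    rintro _ ⟨x, hx, rfl⟩
    obtain ⟨⟨_, j⟩, hj⟩ := Set.mem_iUnion.1 (hCU hx)
    exact Set.mem_iUnion.2 ⟨j, hj.2⟩
  obtain ⟨i, hi⟩ := hσ _ (hC.linear_image (LinearMap.fst ℝ V W)) hfst
  obtain ⟨j, hj⟩ := hτ _ (hC.linear_image (LinearMap.snd ℝ V W)) hsnd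
  exact ⟨(i, j), fun x hx => ⟨hi ⟨x, hx, rfl⟩, hj ⟨x, hx, rfl⟩⟩⟩

theorem inter (hσ : ConvexlyDisjoint σ) (L : Set V) :
    ConvexlyDisjoint (fun i => σ i ∩ L) := by
  intro C hC hCU
  rw [← Set.iUnion_inter] at hCU
  obtain ⟨i, hi⟩ := hσ C hC (hCU.trans Set.inter_subset_left)
  exact ⟨i, Set.subset_inter hi (hCU.trans Set.inter_subset_right)⟩

end ConvexlyDisjoint

/-- (1) The product of two convexly disjoint collections of convex sets (in `ℝⁿ` and `ℝᵐ`)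
is convexly disjoint in `ℝⁿ × ℝᵐ = ℝ^{n+m}`; (2) the intersection of a convexly disjoint
collection of convex sets in `ℝⁿ` with a linear subspace is convexly disjoint. -/
theorem convexlyDisjoint_prod_and_inter :
    (∀ (n m : ℕ) (ι κ : Type) (σ : ι → Set (Fin n → ℝ)) (τ : κ → Set (Fin m → ℝ)),
      (∀ i, Convex ℝ (σ i)) → (∀ j, Convex ℝ (τ j)) →
      ConvexlyDisjoint σ → ConvexlyDisjoint τ →
      ConvexlyDisjoint (fun p : ι × κ => σ p.1 ×ˢ τ p.2)) ∧
    (∀ (n : ℕ) (ι : Type) (σ : ι → Set (Fin n → ℝ)) (L : Submodule ℝ (Fin n → ℝ)),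
      (∀ i, Convex ℝ (σ i)) → ConvexlyDisjoint σ →
      ConvexlyDisjoint (fun i => σ i ∩ (L : Set (Fin n → ℝ)))) :=
  ⟨fun _ _ _ _ _ _ _ _ hσ hτ => hσ.prod hτ, fun _ _ _ L _ hσ => hσ.inter L⟩
end

section
/- With Λ = Z^n, negative definite form, and the quadratic form g = Σ_{1 ≤ i < j ≤ k} x_i x_j, the function α ↦ g(α) on D_n^+ takes value −1 on the roots ε_i − ε_j (i<j≤k), value 1 on the roots ε_i + ε_j (i<j≤k), and value 0 on all other positive roots. Consequently ψ(D_{{1,…,k}}) = 2ψ(A_{k−1}) in N(D_n), where A_{k−1} ⊂ D_{{1,…,k}} is the subsystem with positive roots {ε_i − ε_j : 1 ≤ i < j ≤ k}. -/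
/-- Standard basis vector of `ℤⁿ`. -/
def eZ (n : ℕ) (i : Fin n) : Fin n → ℤ := fun j => if j = i then 1 else 0

/-- The positive roots `εᵢ ± εⱼ` (`i < j`) of `D_n`. -/
def DnPos (n : ℕ) : Set (Fin n → ℤ) :=
  {v | ∃ i j : Fin n, i < j ∧ (v = eZ n i - eZ n j ∨ v = eZ n i + eZ n j)}

/-- The positive roots of the subsystem `D_{1..k}`. -/
def DkPos (n k : ℕ) : Set (Fin n → ℤ) :=
  {v | ∃ i j : Fin n, i < j ∧ (j : ℕ) < k ∧ (v = eZ n i - eZ n j ∨ v = eZ n i + eZ n j)}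

/-- The positive roots `εᵢ − εⱼ` (`i < j ≤ k`) of the subsystem `A_{k−1} ⊂ D_{1..k}`. -/
def AkPos (n k : ℕ) : Set (Fin n → ℤ) :=
  {v | ∃ i j : Fin n, i < j ∧ (j : ℕ) < k ∧ v = eZ n i - eZ n j}

/-- The image of `φ : Sym²(Λ^∨) → ℤ^{D_n⁺}`, `f ↦ (f(α))_α`. -/
def QuadImage (n : ℕ) : Submodule ℤ ({v : Fin n → ℤ // v ∈ DnPos n} → ℤ) :=
  Submodule.span ℤ {F | ∃ c : Fin n → Fin n → ℤ,
    ∀ α : {v : Fin n → ℤ // v ∈ DnPos n}, F α = ∑ i, ∑ j, c i j * (α.1 i * α.1 j)}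

open Classical in
/-- The element `ψ(Θ) = Σ_{α ∈ Θ⁺} [α]` of `ℤ^{D_n⁺}` for a set `T` of positive roots. -/
noncomputable def indFun (n : ℕ) (T : Set (Fin n → ℤ)) :
    {v : Fin n → ℤ // v ∈ DnPos n} → ℤ :=
  fun α => if α.1 ∈ T then 1 else 0

/-- The value of the quadratic form `g = Σ_{1 ≤ i < j ≤ k} xᵢxⱼ` at `v`. -/
def gVal (n k : ℕ) (v : Fin n → ℤ) : ℤ :=
  ∑ p ∈ Finset.univ.filter
      (fun p : Fin n × Fin n => p.1 < p.2 ∧ (p.2 : ℕ) < k), v p.1 * v p.2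

/-! The quadratic form `g = Σ_{i<j<k} xᵢxⱼ` evaluated on the positive roots is an element of the
image of `φ`. On `εᵢ + s εⱼ` (`i < j`) only the monomial `xᵢxⱼ` survives, so `g` takes the value
`s` if `j < k` and `0` otherwise. Hence `g` agrees with `ψ(D_{1..k}) − 2ψ(A_{k−1})` on every
positive root: `1 − 2 = −1` on `εᵢ − εⱼ`, `1 − 0 = 1` on `εᵢ + εⱼ`, and `0` outside `D_{1..k}`. -/

lemma eZ_sub_eZ (n : ℕ) (i j : Fin n) : eZ n i - eZ n j = eZ n i + (-1 : ℤ) • eZ n j := by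
  rw [neg_one_smul, sub_eq_add_neg]

lemma eZ_add_smul_eZ_apply_mul_apply_eq_zero {n : ℕ} {i j a b : Fin n} (s : ℤ)
    (hij : i < j) (hab : a < b) (hne : (a, b) ≠ (i, j)) :
    (eZ n i + s • eZ n j) a * (eZ n i + s • eZ n j) b = 0 := by
  simp only [Pi.add_apply, Pi.smul_apply, smul_eq_mul, eZ, Ne, Prod.mk.injEq] at *
  split_ifs <;> subst_vars <;> simp_all [lt_asymm hij]

lemma gVal_eZ_add_smul_eZ (n k : ℕ) {i j : Fin n} (hij : i < j) (s : ℤ) :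
    gVal n k (eZ n i + s • eZ n j) = if (j : ℕ) < k then s else 0 := by
  unfold gVal
  split_ifs with hjk
  · rw [Finset.sum_eq_single_of_mem (i, j) (by simp [hij, hjk])]
    · simp [eZ, hij.ne, hij.ne']
    · rintro ⟨a, b⟩ hmem hne
      exact eZ_add_smul_eZ_apply_mul_apply_eq_zero s hij (Finset.mem_filter.1 hmem).2.1 hne
  · refine Finset.sum_eq_zero fun ⟨a, b⟩ hmem => ?_
    obtain ⟨hab, hbk⟩ := (Finset.mem_filter.1 hmem).2
    exact eZ_add_smul_eZ_apply_mul_apply_eq_zero s hij hab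
      fun h => hjk ((Prod.mk.inj h).2 ▸ hbk)

lemma gVal_eZ_sub_eZ (n k : ℕ) {i j : Fin n} (hij : i < j) (hjk : (j : ℕ) < k) :
    gVal n k (eZ n i - eZ n j) = -1 := by
  rw [eZ_sub_eZ, gVal_eZ_add_smul_eZ n k hij, if_pos hjk]

lemma gVal_eZ_add_eZ (n k : ℕ) {i j : Fin n} (hij : i < j) (hjk : (j : ℕ) < k) :
    gVal n k (eZ n i + eZ n j) = 1 := by
  simpa [hjk] using gVal_eZ_add_smul_eZ n k hij 1

lemma gVal_eq_zero_of_notMem_DkPos (n k : ℕ) {v : Fin n → ℤ} (hv : v ∈ DnPos n)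
    (hvk : v ∉ DkPos n k) : gVal n k v = 0 := by
  obtain ⟨i, j, hij, hv⟩ := hv
  have hjk : ¬ (j : ℕ) < k := fun h => hvk ⟨i, j, hij, h, hv⟩
  rcases hv with rfl | rfl
  · rw [eZ_sub_eZ, gVal_eZ_add_smul_eZ n k hij, if_neg hjk]
  · simpa [hjk] using gVal_eZ_add_smul_eZ n k hij 1

lemma gVal_eq_sum_sum (n k : ℕ) (v : Fin n → ℤ) :
    gVal n k v = ∑ a : Fin n, ∑ b : Fin n, (if a < b ∧ (b : ℕ) < k then 1 else 0) * (v a * v b) := by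
  rw [gVal, Finset.sum_filter, ← Finset.univ_product_univ, Finset.sum_product]
  simp only [ite_mul, one_mul, zero_mul]

lemma gVal_mem_QuadImage (n k : ℕ) : (fun α : DnPos n => gVal n k α.1) ∈ QuadImage n :=
  Submodule.subset_span ⟨fun a b => if a < b ∧ (b : ℕ) < k then 1 else 0,
    fun α => gVal_eq_sum_sum n k α.1⟩

lemma indFun_DkPos_sub_two_smul_indFun_AkPos (n k : ℕ) :
    indFun n (DkPos n k) - (2 : ℤ) • indFun n (AkPos n k) = fun α => gVal n k α.1 := by
  classical
  funext ⟨v, hv⟩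
  simp only [Pi.sub_apply, Pi.smul_apply, smul_eq_mul, indFun]
  by_cases hA : v ∈ AkPos n k
  · obtain ⟨i, j, hij, hjk, rfl⟩ := id hA
    rw [if_pos hA, if_pos ⟨i, j, hij, hjk, Or.inl rfl⟩, gVal_eZ_sub_eZ n k hij hjk]
    norm_num
  by_cases hD : v ∈ DkPos n k
  · obtain ⟨i, j, hij, hjk, hv | rfl⟩ := id hD
    · exact absurd ⟨i, j, hij, hjk, hv⟩ hA
    · rw [if_pos hD, if_neg hA, gVal_eZ_add_eZ n k hij hjk]
      norm_num
  · rw [if_neg hA, if_neg hD, gVal_eq_zero_of_notMem_DkPos n k hv hD]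
    norm_num

theorem psi_Dk_eq_two_psi_Ak_general (n k : ℕ) :
    (∀ v ∈ DnPos n,
      ((∃ i j : Fin n, i < j ∧ (j : ℕ) < k ∧ v = eZ n i - eZ n j) → gVal n k v = -1) ∧
      ((∃ i j : Fin n, i < j ∧ (j : ℕ) < k ∧ v = eZ n i + eZ n j) → gVal n k v = 1) ∧
      (v ∉ DkPos n k → gVal n k v = 0)) ∧
    (Submodule.Quotient.mk (indFun n (DkPos n k))
        : ({v : Fin n → ℤ // v ∈ DnPos n} → ℤ) ⧸ QuadImage n)
      = (2 : ℤ) • Submodule.Quotient.mk (indFun n (AkPos n k)) := by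
  refine ⟨fun v hv => ⟨?_, ?_, gVal_eq_zero_of_notMem_DkPos n k hv⟩, ?_⟩
  · rintro ⟨i, j, hij, hjk, rfl⟩
    exact gVal_eZ_sub_eZ n k hij hjk
  · rintro ⟨i, j, hij, hjk, rfl⟩
    exact gVal_eZ_add_eZ n k hij hjk
  · rw [← Submodule.Quotient.mk_smul, Submodule.Quotient.eq,
      indFun_DkPos_sub_two_smul_indFun_AkPos]
    exact gVal_mem_QuadImage n k

/-- The quadratic form `g = Σ_{1 ≤ i < j ≤ k} xᵢxⱼ` takes the value `−1` on the roots
`εᵢ − εⱼ` (`i < j ≤ k`), the value `1` on the roots `εᵢ + εⱼ` (`i < j ≤ k`), and `0` on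
all other positive roots of `D_n`.  Consequently `ψ(D_{1..k}) = 2·ψ(A_{k−1})` in
`N(D_n) = coker φ`. -/
theorem psi_Dk_eq_two_psi_Ak (n k : ℕ) (hk : 2 ≤ k) (hkn : k ≤ n) :
    (∀ v ∈ DnPos n,
      ((∃ i j : Fin n, i < j ∧ (j : ℕ) < k ∧ v = eZ n i - eZ n j) → gVal n k v = -1) ∧
      ((∃ i j : Fin n, i < j ∧ (j : ℕ) < k ∧ v = eZ n i + eZ n j) → gVal n k v = 1) ∧
      (v ∉ DkPos n k → gVal n k v = 0)) ∧
    (Submodule.Quotient.mk (indFun n (DkPos n k))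
        : ({v : Fin n → ℤ // v ∈ DnPos n} → ℤ) ⧸ QuadImage n)
      = (2 : ℤ) • Submodule.Quotient.mk (indFun n (AkPos n k)) :=
  psi_Dk_eq_two_psi_Ak_general n k
end
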